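/- Let m₁ be a function ℕ → ℂ∖{0} of Gevrey growth type s₁+s̃₁ (i.e., c^j Γ_{s₁+s̃₁}(j) ≤ |m₁(j)| ≤ C^j Γ_{s₁+s̃₁}(j)), let λ ∈ ℂ, β ≥ 1, and let ĥ(t) = Σ_{j≥0} (h_j/m₁(j)) t^j be a formal power series with coefficients h_j in a Banach space E satisfying ‖h_j‖ ≤ A B^j Γ_{σ}(j) for some constants A, B and some σ ∈ ℝ. Suppose additionally that a sequence of 'pseudodifferential iterates' L^k h_j satisfies ‖L^k h_j‖ ≤ A' (B')^{j+k} Γ_{ρ}(k) Γ_{σ}(j) for constants A', B' and some ρ ≥ 0. Then the formal series v̂(t) = Σ_{j≥β} (t^j/m₁(j)) Σ_{k=β−1}^{j−1} C(k,β−1) L^{k−β+1} h_{j−k−1} has coefficients v_j := Σ_{k=β−1}^{j−1} C(k,β−1) L^{k−β+1} h_{j−k−1} satisfying ‖v_j‖ ≤ A'' (B'')^j Γ_{max{ρ,σ}}(j) for some constants A'', B''. -/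

import Mathlib

noncomputable def GammaS (s : ℝ) (n : ℕ) : ℝ :=
  if 0 ≤ s then Real.Gamma (1 + s * n) else (Real.Gamma (1 - s * n))⁻¹

/-!
Writing `τ = max ρ σ`, each term of `v_j` is bounded through the hypothesis on the iterates by
`A' B'^j Γ_ρ(a) Γ_σ(b)` with `a + b ≤ j`. On `[1, ∞)` the Gamma function is monotone up to a
factor `2` (it is at most `1` on `[1, 2]` and at least `1/2` on `[1, ∞)`), and log-convexity with
`Γ(1) = 1` makes `x ↦ Γ(1 + x)` supermultiplicative; together these give
`Γ_ρ(a) Γ_σ(b) ≤ 8 Γ_τ(j)` (when `σ < 0`, `Γ_σ(b) ≤ 2` simply). The binomial weights sum to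
`C(j, β)` by the hockey-stick identity, which is at most `2^j`.
-/

open Finset

namespace Real

lemma Gamma_le_one_of_mem_Icc {x : ℝ} (hx : x ∈ Set.Icc 1 2) : Gamma x ≤ 1 := by
  have := convexOn_Gamma.le_on_segment (by norm_num : (1 : ℝ) ∈ Set.Ioi 0)
    (by norm_num : (2 : ℝ) ∈ Set.Ioi 0) (by rwa [segment_eq_Icc one_le_two])
  simpa [Gamma_one, Gamma_two] using this

lemma one_le_Gamma_of_two_le {x : ℝ} (hx : 2 ≤ x) : 1 ≤ Gamma x :=
  Gamma_two ▸ Gamma_strictMonoOn_Ici.monotoneOn Set.self_mem_Ici hx hx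

lemma one_half_le_Gamma {x : ℝ} (hx : 1 ≤ x) : 1 / 2 ≤ Gamma x := by
  rcases le_total 2 x with h2 | h2
  · linarith [one_le_Gamma_of_two_le h2]
  · have hrec : Gamma (x + 1) = x * Gamma x := Gamma_add_one (by positivity)
    have h1 : 1 ≤ Gamma (x + 1) := one_le_Gamma_of_two_le (by linarith)
    nlinarith [Gamma_pos_of_pos (by linarith : 0 < x)]

lemma Gamma_le_two_mul_Gamma {x y : ℝ} (hx : 1 ≤ x) (hxy : x ≤ y) :
    Gamma x ≤ 2 * Gamma y := by
  rcases le_total 2 x with h2 | h2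
  · have := Gamma_strictMonoOn_Ici.monotoneOn h2 (h2.trans hxy) hxy
    linarith [Gamma_pos_of_pos (by linarith : 0 < y)]
  · linarith [Gamma_le_one_of_mem_Icc ⟨hx, h2⟩, one_half_le_Gamma (hx.trans hxy)]

lemma Gamma_one_add_le_rpow {u v : ℝ} (hu : 0 < u) (hv : 0 < v) :
    Gamma (1 + u) ≤ Gamma (1 + (u + v)) ^ (u / (u + v)) := by
  have := Gamma_mul_add_mul_le_rpow_Gamma_mul_rpow_Gamma one_pos (by positivity : 0 < 1 + (u + v))
    (by positivity : 0 < v / (u + v)) (by positivity : 0 < u / (u + v)) (by field_simp; ring)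
  rwa [Gamma_one, one_rpow, one_mul,
    show v / (u + v) * 1 + u / (u + v) * (1 + (u + v)) = 1 + u by field_simp; ring] at this

lemma Gamma_one_add_mul_Gamma_one_add_le {x y : ℝ} (hx : 0 ≤ x) (hy : 0 ≤ y) :
    Gamma (1 + x) * Gamma (1 + y) ≤ Gamma (1 + (x + y)) := by
  rcases hx.eq_or_lt with rfl | hx
  · simp
  rcases hy.eq_or_lt with rfl | hy
  · simp
  have hpos : 0 < Gamma (1 + (x + y)) := Gamma_pos_of_pos (by positivity)
  calc Gamma (1 + x) * Gamma (1 + y)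
      ≤ Gamma (1 + (x + y)) ^ (x / (x + y)) * Gamma (1 + (x + y)) ^ (y / (x + y)) := by
        refine mul_le_mul (Gamma_one_add_le_rpow hx hy) ?_ (Gamma_pos_of_pos (by positivity)).le
          (by positivity)
        rw [add_comm x y]
        exact Gamma_one_add_le_rpow hy hx
    _ = Gamma (1 + (x + y)) := by
        rw [← rpow_add hpos, ← add_div, div_self (by positivity), rpow_one]

end Real

section GammaS

open Real

lemma GammaS_of_nonneg {s : ℝ} (hs : 0 ≤ s) (n : ℕ) : GammaS s n = Gamma (1 + s * n) :=
  if_pos hs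

lemma GammaS_pos (s : ℝ) (n : ℕ) : 0 < GammaS s n := by
  unfold GammaS
  split_ifs with hs
  · exact Gamma_pos_of_pos (by positivity)
  · exact inv_pos.mpr (Gamma_pos_of_pos (by nlinarith [n.cast_nonneg (α := ℝ)]))

lemma GammaS_le_two_of_neg {s : ℝ} (hs : s < 0) (n : ℕ) : GammaS s n ≤ 2 := by
  rw [GammaS, if_neg hs.not_ge]
  have := one_half_le_Gamma (x := 1 - s * n) (by nlinarith [n.cast_nonneg (α := ℝ)])
  rw [inv_le_comm₀ (by linarith) two_pos]
  linarith

lemma GammaS_le_two_mul_GammaS {s s' : ℝ} {m n : ℕ} (hs : 0 ≤ s) (hss' : s ≤ s')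
    (hmn : m ≤ n) : GammaS s m ≤ 2 * GammaS s' n := by
  have hmn : (m : ℝ) ≤ n := by exact_mod_cast hmn
  rw [GammaS_of_nonneg hs, GammaS_of_nonneg (hs.trans hss')]
  exact Gamma_le_two_mul_Gamma (by nlinarith [m.cast_nonneg (α := ℝ)])
    (by nlinarith [m.cast_nonneg (α := ℝ)])

lemma GammaS_mul_GammaS_le {s : ℝ} (hs : 0 ≤ s) (m n : ℕ) :
    GammaS s m * GammaS s n ≤ GammaS s (m + n) := by
  simp only [GammaS_of_nonneg hs, Nat.cast_add, mul_add]
  exact Gamma_one_add_mul_Gamma_one_add_le (by positivity) (by positivity)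

lemma GammaS_mul_GammaS_le_eight_mul {ρ σ : ℝ} (hρ : 0 ≤ ρ) {a b j : ℕ} (hj : a + b ≤ j) :
    GammaS ρ a * GammaS σ b ≤ 8 * GammaS (max ρ σ) j := by
  have hτ : 0 ≤ max ρ σ := hρ.trans (le_max_left ρ σ)
  rcases le_or_gt 0 σ with hσ | hσ
  · calc GammaS ρ a * GammaS σ b
        ≤ (2 * GammaS (max ρ σ) a) * (2 * GammaS (max ρ σ) b) := by
          exact mul_le_mul (GammaS_le_two_mul_GammaS hρ (le_max_left ρ σ) le_rfl)
            (GammaS_le_two_mul_GammaS hσ (le_max_right ρ σ) le_rfl) (GammaS_pos σ b).le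
            (mul_pos two_pos (GammaS_pos _ a)).le
      _ = 4 * (GammaS (max ρ σ) a * GammaS (max ρ σ) b) := by ring
      _ ≤ 4 * GammaS (max ρ σ) (a + b) := by gcongr; exact GammaS_mul_GammaS_le hτ a b
      _ ≤ 4 * (2 * GammaS (max ρ σ) j) := by gcongr; exact GammaS_le_two_mul_GammaS hτ le_rfl hj
      _ = 8 * GammaS (max ρ σ) j := by ring
  · calc GammaS ρ a * GammaS σ b
        ≤ (2 * GammaS (max ρ σ) j) * 2 := by
          exact mul_le_mul (GammaS_le_two_mul_GammaS hρ (le_max_left ρ σ) (by omega))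
            (GammaS_le_two_of_neg hσ b) (GammaS_pos σ b).le
            (mul_pos two_pos (GammaS_pos _ j)).le
      _ ≤ 8 * GammaS (max ρ σ) j := by linarith [GammaS_pos (max ρ σ) j]

end GammaS

lemma Nat.sum_Ico_choose (r j : ℕ) : ∑ k ∈ Ico r j, k.choose r = j.choose (r + 1) := by
  cases j with
  | zero => simp
  | succ n => rw [Ico_add_one_right_eq_Icc, Nat.sum_Icc_choose]

lemma norm_sum_Ico_choose_smul_le {𝕜 E : Type*} [RCLike 𝕜] [NormedAddCommGroup E]
    [NormedSpace 𝕜 E] (r j : ℕ) (x : ℕ → E) {M : ℝ} (hx : ∀ k ∈ Ico r j, ‖x k‖ ≤ M) :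
    ‖∑ k ∈ Ico r j, (k.choose r : 𝕜) • x k‖ ≤ j.choose (r + 1) * M := by
  calc ‖∑ k ∈ Ico r j, (k.choose r : 𝕜) • x k‖
      ≤ ∑ k ∈ Ico r j, (k.choose r : ℝ) * M := by
        refine (norm_sum_le _ _).trans (sum_le_sum fun k hk => ?_)
        rw [norm_smul, RCLike.norm_natCast]
        exact mul_le_mul_of_nonneg_left (hx k hk) (by positivity)
    _ = j.choose (r + 1) * M := by
        rw [← sum_mul]
        exact_mod_cast congrArg (· * M) (congrArg Nat.cast (Nat.sum_Ico_choose r j))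

lemma mul_pow_mul_GammaS_mul_GammaS_le {A' B' ρ σ : ℝ} (hA' : 0 < A') (hB' : 0 < B')
    (hρ : 0 ≤ ρ) {a b j : ℕ} (hj : a + b ≤ j) :
    A' * B' ^ (b + a) * GammaS ρ a * GammaS σ b ≤
      8 * A' * max B' 1 ^ j * GammaS (max ρ σ) j := by
  have hpow : B' ^ (b + a) ≤ max B' 1 ^ j :=
    (pow_le_pow_left₀ hB'.le (le_max_left B' 1) _).trans
      (pow_le_pow_right₀ (le_max_right B' 1) (by omega))
  calc A' * B' ^ (b + a) * GammaS ρ a * GammaS σ b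
      = A' * B' ^ (b + a) * (GammaS ρ a * GammaS σ b) := by ring
    _ ≤ A' * max B' 1 ^ j * (8 * GammaS (max ρ σ) j) := by
        exact mul_le_mul (by gcongr) (GammaS_mul_GammaS_le_eight_mul hρ hj)
          (mul_pos (GammaS_pos ρ a) (GammaS_pos σ b)).le (by positivity)
    _ = 8 * A' * max B' 1 ^ j * GammaS (max ρ σ) j := by ring

theorem gevrey_estimate_formal_solution_general
    {E : Type*} [NormedAddCommGroup E] [NormedSpace ℂ E]
    (σ ρ : ℝ) (hρ : 0 ≤ ρ)
    (L : E →ₗ[ℂ] E) (β : ℕ) (h : ℕ → E)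
    (A' B' : ℝ) (hA' : 0 < A') (hB' : 0 < B')
    (hL : ∀ k j, ‖(L ^ k) (h j)‖ ≤ A' * B' ^ (j + k) * GammaS ρ k * GammaS σ j) :
    ∃ A'' B'' : ℝ, 0 < A'' ∧ 0 < B'' ∧ ∀ j,
      ‖∑ k ∈ Finset.Ico (β - 1) j,
          (k.choose (β - 1) : ℂ) • (L ^ (k + 1 - β)) (h (j - k - 1))‖
        ≤ A'' * B'' ^ j * GammaS (max ρ σ) j := by
  refine ⟨8 * A', 2 * max B' 1, by positivity, by positivity, fun j => ?_⟩
  have hterm : ∀ k ∈ Ico (β - 1) j, ‖(L ^ (k + 1 - β)) (h (j - k - 1))‖ ≤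
      8 * A' * max B' 1 ^ j * GammaS (max ρ σ) j := fun k hk =>
    (hL _ _).trans (mul_pow_mul_GammaS_mul_GammaS_le hA' hB' hρ (by grind))
  calc _ ≤ j.choose (β - 1 + 1) * (8 * A' * max B' 1 ^ j * GammaS (max ρ σ) j) :=
        norm_sum_Ico_choose_smul_le _ _ _ hterm
    _ ≤ 2 ^ j * (8 * A' * max B' 1 ^ j * GammaS (max ρ σ) j) := by
        gcongr
        · exact (mul_pos (by positivity) (GammaS_pos _ _)).le
        · exact_mod_cast Nat.choose_le_two_pow _ _
    _ = 8 * A' * (2 * max B' 1) ^ j * GammaS (max ρ σ) j := by ring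

/-- Gevrey estimate for the coefficients of the formal solution
`v̂ = Σ_j (t^j/m₁(j)) Σ_{k=β-1}^{j-1} C(k,β-1) L^{k-β+1} h_{j-k-1}`:
under the stated growth hypotheses on `m₁`, the `h_j` and the iterates `L^k h_j`,
the coefficients `v_j` satisfy `‖v_j‖ ≤ A'' B''^j Γ_{max{ρ,σ}}(j)`. -/
theorem gevrey_estimate_formal_solution
    {E : Type*} [NormedAddCommGroup E] [NormedSpace ℂ E]
    (m₁ : ℕ → ℂ) (s₁ t₁ σ ρ : ℝ) (hρ : 0 ≤ ρ)
    (c C : ℝ) (hc : 0 < c) (hC : 0 < C)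
    (hm : ∀ j, c ^ j * GammaS (s₁ + t₁) j ≤ ‖m₁ j‖ ∧ ‖m₁ j‖ ≤ C ^ j * GammaS (s₁ + t₁) j)
    (L : E →ₗ[ℂ] E) (β : ℕ) (hβ : 1 ≤ β) (h : ℕ → E)
    (A B : ℝ) (hA : 0 < A) (hB : 0 < B) (hh : ∀ j, ‖h j‖ ≤ A * B ^ j * GammaS σ j)
    (A' B' : ℝ) (hA' : 0 < A') (hB' : 0 < B')
    (hL : ∀ k j, ‖(L ^ k) (h j)‖ ≤ A' * B' ^ (j + k) * GammaS ρ k * GammaS σ j) :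
    ∃ A'' B'' : ℝ, 0 < A'' ∧ 0 < B'' ∧ ∀ j,
      ‖∑ k ∈ Finset.Ico (β - 1) j,
          (k.choose (β - 1) : ℂ) • (L ^ (k + 1 - β)) (h (j - k - 1))‖
        ≤ A'' * B'' ^ j * GammaS (max ρ σ) j :=
  gevrey_estimate_formal_solution_general σ ρ hρ L β h A' B' hA' hB' hL
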